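/- arXiv:2410.08640 — 3 statements merged into one kernel-verified Lean document; each statement's English description precedes it below -/
import Mathlib

section
/- Let 𝒳 ⊆ Φ be an almost parabolic set of roots, and for β,γ ∈ 𝒳 let m_{β,γ} denote the order of the element r_β·r_γ in W. Then M_𝒳 = (m_{β,γ})_{β,γ∈𝒳} is a Coxeter matrix on 𝒳 (m_{β,β} = 1, m_{β,γ} = m_{γ,β} ≥ 2 for β ≠ γ), and the group homomorphism from the abstract Coxeter group with presentation ⟨q_β, β ∈ 𝒳 | q_β² = 1 for all β, (q_β q_γ)^{m_{β,γ}} = 1 for β ≠ γ with m_{β,γ} ≠ ∞⟩ to W determined by q_β ↦ r_β is injective with image W_𝒳; in other words, (W_𝒳, R_𝒳) is a Coxeter system with Coxeter matrix M_𝒳. -/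
/-!
Context: `(W, S)` is a Coxeter system for the Coxeter matrix `M` (Mathlib's convention:
the entry `0` encodes `∞`).  `V = ⊕_{s ∈ S} ℝ·α_s` is realized as `S →₀ ℝ` with
`α_s = simpleRoot s`, equipped with the canonical symmetric bilinear form `bform M`.
The canonical faithful form-preserving representation `ρ : W →* GL(V)` and the map
`β ↦ r_β` assigning to each root its reflection are given as data, characterized by
the usual formulas (`hρ`, `hρinj`, `hρform`, `hr` below).
-/

noncomputable section

open scoped Real Pointwise

variable {S W : Type*}

/-- The simple root `α_s`. -/
def simpleRoot (s : S) : S →₀ ℝ := Finsupp.single s 1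

/-- The entry `⟨α_s, α_t⟩ = -cos (π / m_{s,t})` of the canonical bilinear form,
interpreted as `-1` when `m_{s,t} = ∞` (encoded by `0`). -/
def formEntry (M : CoxeterMatrix S) (s t : S) : ℝ :=
  if M s t = 0 then -1 else -Real.cos (Real.pi / (M s t : ℝ))

/-- The canonical symmetric bilinear form on `V = ⊕_{s ∈ S} ℝ·α_s`. -/
def bform (M : CoxeterMatrix S) : (S →₀ ℝ) →ₗ[ℝ] (S →₀ ℝ) →ₗ[ℝ] ℝ :=
  Finsupp.basisSingleOne.constr ℝ fun s =>
    Finsupp.basisSingleOne.constr ℝ fun t => formEntry M s t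

variable [Group W]

/-- The root system `Φ = { w (α_s) : w ∈ W, s ∈ S }`. -/
def rootSystem (ρ : W →* ((S →₀ ℝ) ≃ₗ[ℝ] (S →₀ ℝ))) : Set (S →₀ ℝ) :=
  Set.range fun p : W × S => ρ p.1 (simpleRoot p.2)

/-- A subset `𝒳 ⊆ V` is almost parabolic (AP): (AP1) the vectors of `𝒳` are linearly
independent, and (AP2) any two elements of `𝒳` are of the form `w (α_s)`, `w (α_t)` for a
common `w ∈ W`. -/
def IsAP (ρ : W →* ((S →₀ ℝ) ≃ₗ[ℝ] (S →₀ ℝ))) (𝒳 : Set (S →₀ ℝ)) : Prop :=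
  LinearIndependent ℝ ((↑) : 𝒳 → (S →₀ ℝ)) ∧
    ∀ β ∈ 𝒳, ∀ γ ∈ 𝒳, ∃ (w : W) (s t : S),
      ρ w (simpleRoot s) = β ∧ ρ w (simpleRoot t) = γ

/-- `g ∈ W` is a product of `n` elements of `T`. -/
def HasLen (T : Set W) (g : W) (n : ℕ) : Prop :=
  ∃ l : List W, (∀ x ∈ l, x ∈ T) ∧ l.prod = g ∧ l.length = n

/-- `u` has minimal word length (w.r.t. the generating set `T`) in the coset `u·H`. -/
def MinimalInCoset (T : Set W) (H : Subgroup W) (u : W) : Prop :=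
  ∀ h ∈ H, ∀ m, HasLen T (u * h) m → ∃ n ≤ m, HasLen T u n

/-!
Every `β ∈ 𝒳` is a root, so `r_β` acts as the reflection `v ↦ v - 2⟨β, v⟩β`. By (AP2) two roots
`β, γ ∈ 𝒳` are simultaneously conjugate to simple roots `α_s, α_t`, hence
`⟨β, γ⟩ = -cos (π / m_{s,t})` and `r_β r_γ` is conjugate to `s t`. On the plane `ℝβ + ℝγ`, which
is two-dimensional by (AP1), `(r_β r_γ)^n` has Chebyshev coefficients `sin (kπ/m) / sin (π/m)`,
and these show that the order of `r_β r_γ` is exactly `m_{s,t}`.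

Thus `𝒳` with the form `⟨·,·⟩` plays for the Coxeter group of `M_𝒳` the role of the simple roots
in the Tits representation, and the classical proof that this representation is faithful goes
through with only linear independence of `𝒳`: if `ℓ(w s_β) > ℓ(w)` then `w(β)` is a nonnegative
combination of `𝒳` (induction on `ℓ(w)`, peeling off a dihedral factor on which the Chebyshev
coefficients are nonnegative), whereas a nontrivial `w` in the kernel with right descent `s_β`
gives `(w s_β)(β) = -β`.
-/

open Polynomial Polynomial.Chebyshev

-- `m = 0` encodes `m = ∞` (as in `CoxeterMatrix`), and `cos (π / ∞) = 1`.
def coxeterCos (m : ℕ) : ℝ := if m = 0 then 1 else Real.cos (π / m)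

lemma coxeterCos_one : coxeterCos 1 = -1 := by simp [coxeterCos]

lemma chebyshevU_eval_coxeterCos_nonneg {m : ℕ} (hm : m ≠ 1) {n : ℤ} (hn : -1 ≤ n)
    (hnm : m ≠ 0 → n < m) : 0 ≤ (U ℝ n).eval (coxeterCos m) := by
  rcases eq_or_ne m 0 with rfl | hm0
  · simp only [coxeterCos, if_true, U_eval_one]
    exact_mod_cast (by omega : (0 : ℤ) ≤ n + 1)
  have hm2 : (2 : ℝ) ≤ m := by exact_mod_cast (by omega : 2 ≤ m)
  have hθ : 0 < π / m := by positivity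
  have hsin : 0 < Real.sin (π / m) :=
    Real.sin_pos_of_pos_of_lt_pi hθ (div_lt_self Real.pi_pos (by linarith))
  have hle : ((n : ℝ) + 1) * (π / m) ≤ π := by
    have : (n : ℝ) + 1 ≤ m := by exact_mod_cast (hnm hm0)
    calc ((n : ℝ) + 1) * (π / m) ≤ m * (π / m) := by gcongr
      _ = π := by field_simp
  have hprod := U_real_cos (π / m) n
  rw [coxeterCos, if_neg hm0]
  refine nonneg_of_mul_nonneg_left ?_ hsin
  rw [hprod]
  exact Real.sin_nonneg_of_nonneg_of_le_pi
    (mul_nonneg (by exact_mod_cast (by omega : (0 : ℤ) ≤ n + 1)) hθ.le) hle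

lemma dvd_of_chebyshevU_eval_coxeterCos {m n : ℕ} (hm : m ≠ 1)
    (h0 : (U ℝ (2 * n - 1)).eval (coxeterCos m) = 0)
    (h1 : (U ℝ (2 * n)).eval (coxeterCos m) = 1) : m ∣ n := by
  rcases eq_or_ne m 0 with rfl | hm0
  · simp only [coxeterCos, if_true, U_eval_one] at h0
    have : (n : ℝ) = 0 := by push_cast at h0; linarith
    simp_all
  have hT : Real.cos ((2 * n : ℤ) * (π / m)) = 1 := by
    rw [← T_real_cos, T_eq_U_sub_X_mul_U]
    simp only [coxeterCos, if_neg hm0] at h0 h1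
    simp [h0, h1]
  obtain ⟨z, hz⟩ := (Real.cos_eq_one_iff _).1 hT
  have hzn : (z : ℝ) * m = n := by
    have hm' : (m : ℝ) ≠ 0 := by exact_mod_cast hm0
    field_simp at hz
    push_cast at hz
    nlinarith [Real.pi_pos]
  have : (n : ℤ) = z * m := by exact_mod_cast hzn.symm
  exact Int.natCast_dvd_natCast.1 ⟨z, by rw [this, mul_comm]⟩

section ReflectionPair

variable {G V : Type*} [Group G] [AddCommGroup V] [Module ℝ V]

structure IsReflectionPair (σ : G →* (V ≃ₗ[ℝ] V)) (F : V →ₗ[ℝ] V →ₗ[ℝ] ℝ) (g h : G)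
    (β γ : V) (a : ℝ) : Prop where
  apply_left : ∀ v, σ g v = v - (2 * F β v) • β
  apply_right : ∀ v, σ h v = v - (2 * F γ v) • γ
  form_left : F β β = 1
  form_right : F γ γ = 1
  form_left_right : F β γ = -a
  form_right_left : F γ β = -a

namespace IsReflectionPair

variable {σ : G →* (V ≃ₗ[ℝ] V)} {F : V →ₗ[ℝ] V →ₗ[ℝ] ℝ} {g h : G} {β γ : V} {a : ℝ}

lemma apply_left_combination (hp : IsReflectionPair σ F g h β γ a) (p q : ℝ) :
    σ g (p • β + q • γ) = (2 * a * q - p) • β + q • γ := by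
  rw [hp.apply_left, map_add, map_smul, map_smul, hp.form_left, hp.form_left_right]
  simp only [smul_eq_mul]
  module

lemma apply_right_combination (hp : IsReflectionPair σ F g h β γ a) (p q : ℝ) :
    σ h (p • β + q • γ) = p • β + (2 * a * p - q) • γ := by
  rw [hp.apply_right, map_add, map_smul, map_smul, hp.form_right, hp.form_right_left]
  simp only [smul_eq_mul]
  module

lemma apply_pow_mul (hp : IsReflectionPair σ F g h β γ a) (n : ℕ) :
    σ ((g * h) ^ n) β = (U ℝ (2 * n)).eval a • β + (U ℝ (2 * n - 1)).eval a • γ ∧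
      σ (h * (g * h) ^ n) β = (U ℝ (2 * n)).eval a • β + (U ℝ (2 * n + 1)).eval a • γ := by
  induction n with
  | zero =>
    refine ⟨by simp, ?_⟩
    simpa [U_one] using hp.apply_right_combination 1 0
  | succ n ih =>
    have hstep : σ ((g * h) ^ (n + 1)) β = σ g (σ (h * (g * h) ^ n) β) := by
      rw [pow_succ', mul_assoc, map_mul, LinearEquiv.mul_apply]
    have h1 : σ ((g * h) ^ (n + 1)) β =
        (U ℝ (2 * (n + 1 : ℕ))).eval a • β + (U ℝ (2 * (n + 1 : ℕ) - 1)).eval a • γ := by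
      rw [hstep, ih.2, hp.apply_left_combination]
      push_cast
      rw [show 2 * ((n : ℤ) + 1) = 2 * n + 2 by ring, U_add_two]
      simp only [eval_sub, eval_mul, eval_X, eval_ofNat]
      ring_nf
    refine ⟨h1, ?_⟩
    rw [map_mul, LinearEquiv.mul_apply, h1, hp.apply_right_combination]
    push_cast
    rw [show 2 * ((n : ℤ) + 1) + 1 = (2 * n + 1) + 2 by ring, U_add_two]
    simp only [eval_sub, eval_mul, eval_X, eval_ofNat]
    ring_nf

lemma orderOf_mul_eq {m : ℕ} (hp : IsReflectionPair σ F g h β γ (coxeterCos m))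
    (hβγ : LinearIndependent ℝ ![β, γ]) (hm : m ≠ 1) (hrel : (g * h) ^ m = 1) :
    orderOf (g * h) = m := by
  refine Nat.dvd_antisymm (orderOf_dvd_of_pow_eq_one hrel) ?_
  have hfix := (hp.apply_pow_mul (orderOf (g * h))).1
  rw [pow_orderOf_eq_one, map_one] at hfix
  change β = _ at hfix
  obtain ⟨h1, h0⟩ := LinearIndependent.pair_iff.1 hβγ
    ((U ℝ (2 * orderOf (g * h))).eval (coxeterCos m) - 1)
    ((U ℝ (2 * orderOf (g * h) - 1)).eval (coxeterCos m))
    (by rw [sub_smul, one_smul, sub_add_eq_add_sub, ← hfix, sub_self])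
  exact dvd_of_chebyshevU_eval_coxeterCos hm h0 (sub_eq_zero.1 h1)

-- The group element is written in the shape of `CoxeterSystem.prod_alternatingWord_eq_mul_pow`.
lemma exists_nonneg_apply {m k : ℕ} (hp : IsReflectionPair σ F g h β γ (coxeterCos m))
    (hm : m ≠ 1) (hk : m ≠ 0 → k < m) :
    ∃ p q : ℝ, 0 ≤ p ∧ 0 ≤ q ∧
      σ ((if Even k then 1 else h) * (g * h) ^ (k / 2)) β = p • β + q • γ := by
  have hU : ∀ n : ℤ, -1 ≤ n → n < k + 1 → 0 ≤ (U ℝ n).eval (coxeterCos m) := fun n h1 h2 =>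
    chebyshevU_eval_coxeterCos_nonneg hm h1 fun hm0 => by have := hk hm0; omega
  obtain ⟨n, rfl | rfl⟩ := Nat.even_or_odd' k
  · refine ⟨_, _, hU (2 * n) (by omega) (by omega), hU (2 * n - 1) (by omega) (by omega), ?_⟩
    simpa using (hp.apply_pow_mul n).1
  · refine ⟨_, _, hU (2 * n) (by omega) (by omega), hU (2 * n + 1) (by omega) (by omega), ?_⟩
    have hodd : ¬ Even (2 * n + 1) := Nat.not_even_iff_odd.2 (odd_two_mul_add_one n)
    simpa [hodd, Nat.mul_add_div] using (hp.apply_pow_mul n).2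

end IsReflectionPair

end ReflectionPair

section WordLength

variable {G : Type*} [Group G] {T : Set G}

def IsMinLen (T : Set G) (x : G) (k : ℕ) : Prop :=
  HasLen T x k ∧ ∀ n, HasLen T x n → k ≤ n

lemma hasLen_one : HasLen T 1 0 := ⟨[], by simp, rfl, rfl⟩

lemma HasLen.mul {x y : G} {n : ℕ} (hx : HasLen T x n) (hy : y ∈ T) : HasLen T (x * y) (n + 1) := by
  obtain ⟨l, hl, rfl, rfl⟩ := hx
  exact ⟨l ++ [y], by simpa [or_imp, forall_and] using ⟨hl, hy⟩, by simp, by simp⟩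

lemma HasLen.mul_left {x y : G} {n : ℕ} (hy : y ∈ T) (hx : HasLen T x n) :
    HasLen T (y * x) (n + 1) := by
  obtain ⟨l, hl, rfl, rfl⟩ := hx
  exact ⟨y :: l, by simpa using ⟨hy, hl⟩, by simp, by simp⟩

lemma HasLen.eq_one {x : G} (hx : HasLen T x 0) : x = 1 := by
  obtain ⟨l, -, rfl, hl⟩ := hx
  simp [List.length_eq_zero_iff.1 hl]

lemma HasLen.exists_mul {x : G} {n : ℕ} (hx : HasLen T x (n + 1)) :
    ∃ x' y, HasLen T x' n ∧ y ∈ T ∧ x = x' * y := by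
  obtain ⟨l, hl, rfl, hlen⟩ := hx
  obtain ⟨l', y, rfl⟩ := l.eq_nil_or_concat.resolve_left (by rintro rfl; simp at hlen)
  exact ⟨l'.prod, y, ⟨l', fun z hz => hl z (by simp [hz]), rfl, by simpa using hlen⟩,
    hl y (by simp), by simp⟩

lemma IsMinLen.exists_mul {x : G} {n : ℕ} (hx : IsMinLen T x (n + 1)) :
    ∃ x' y, IsMinLen T x' n ∧ y ∈ T ∧ x = x' * y := by
  obtain ⟨x', y, hx', hy, rfl⟩ := hx.1.exists_mul
  exact ⟨x', y, ⟨hx', fun k hk => Nat.le_of_succ_le_succ (hx.2 _ (hk.mul hy))⟩, hy, rfl⟩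

end WordLength

lemma LinearIndependent.neg_notMem_hull {ι V : Type*} [AddCommGroup V] [Module ℝ V] {e : ι → V}
    (he : LinearIndependent ℝ e) (i : ι) : -e i ∉ PointedCone.hull ℝ (Set.range e) := by
  obtain ⟨φ, hφ⟩ := LinearMap.exists_extend ((Finsupp.lapply i).comp he.repr)
  have hφe : ∀ j, φ (e j) = Finsupp.single j 1 i := fun j => by
    have := LinearMap.congr_fun hφ ⟨e j, Submodule.subset_span (Set.mem_range_self j)⟩
    simpa [he.repr_eq_single j ⟨e j, _⟩ rfl] using this
  have hle : PointedCone.hull ℝ (Set.range e) ≤ (PointedCone.positive ℝ ℝ).comap φ := by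
    refine Submodule.span_le.2 ?_
    rintro _ ⟨j, rfl⟩
    simpa [hφe] using Finsupp.single_nonneg.2 zero_le_one i
  intro h
  have := hle h
  norm_num [hφe] at this

namespace CoxeterSystem

variable {ι H V : Type*} [Group H] [AddCommGroup V] [Module ℝ V] {B : CoxeterMatrix ι}
  (cs : CoxeterSystem B H)

lemma length_le_of_hasLen {T : Set H} (hT : T ⊆ Set.range cs.simple) {x : H} {n : ℕ}
    (hx : HasLen T x n) : cs.length x ≤ n := by
  obtain ⟨l, hl, rfl, rfl⟩ := hx
  induction l with
  | nil => simp
  | cons y l ih =>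
    obtain ⟨i, rfl⟩ := hT (hl y (by simp))
    rw [List.prod_cons, List.length_cons]
    have := ih (fun z hz => hl z (by simp [hz]))
    have := cs.length_mul_le (cs.simple i) l.prod
    rw [cs.length_simple] at this
    omega

lemma wordProd_alternatingWord_succ (i j : ι) (k : ℕ) :
    cs.wordProd (alternatingWord i j (k + 1)) =
      cs.wordProd (alternatingWord j i k) * cs.simple j := by
  rw [alternatingWord_succ, wordProd_concat]

lemma wordProd_alternatingWord_succ_mul_simple (i j : ι) (k : ℕ) :
    cs.wordProd (alternatingWord i j (k + 1)) * cs.simple j =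
      cs.wordProd (alternatingWord j i k) := by
  rw [wordProd_alternatingWord_succ, simple_mul_simple_cancel_right]

lemma hasLen_alternatingWord (i j : ι) (k : ℕ) :
    HasLen {cs.simple i, cs.simple j} (cs.wordProd (alternatingWord i j k)) k := by
  induction k generalizing i j with
  | zero => exact hasLen_one
  | succ k ih =>
    rw [wordProd_alternatingWord_succ, Set.pair_comm]
    exact (ih j i).mul (by simp)

lemma hasLen_alternatingWord_succ_mul_simple (i j : ι) (k : ℕ) :
    HasLen {cs.simple i, cs.simple j}
      (cs.wordProd (alternatingWord j i (k + 1)) * cs.simple i) k := by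
  rw [wordProd_alternatingWord_succ_mul_simple]
  exact cs.hasLen_alternatingWord i j k

-- Appending the letter `s j` to a nonempty word ending in `s j` would shorten it.
lemma alternatingWord_mul_of_isMinLen {i j : ι} {k : ℕ} {y : H}
    (hy : y ∈ ({cs.simple i, cs.simple j} : Set H))
    (hx : IsMinLen {cs.simple i, cs.simple j} (cs.wordProd (alternatingWord i j k) * y) (k + 1)) :
    cs.wordProd (alternatingWord i j k) * y = cs.wordProd (alternatingWord i j (k + 1)) ∨
      cs.wordProd (alternatingWord i j k) * y = cs.wordProd (alternatingWord j i (k + 1)) := by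
  rcases hy with rfl | rfl
  · exact Or.inr (cs.wordProd_alternatingWord_succ j i k).symm
  · cases k with
    | zero => exact Or.inl (by simp [alternatingWord])
    | succ k =>
      have hlen := cs.hasLen_alternatingWord_succ_mul_simple j i k
      rw [Set.pair_comm] at hlen
      have := hx.2 k hlen
      omega

lemma eq_alternatingWord_of_isMinLen {i j : ι} {x : H} {k : ℕ}
    (hx : IsMinLen {cs.simple i, cs.simple j} x k) :
    x = cs.wordProd (alternatingWord i j k) ∨ x = cs.wordProd (alternatingWord j i k) := by
  induction k generalizing x with
  | zero => exact Or.inl (by simpa [alternatingWord] using hx.1.eq_one)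
  | succ k ih =>
    obtain ⟨x', y, hx', hy, rfl⟩ := hx.exists_mul
    rcases ih hx' with rfl | rfl
    · exact cs.alternatingWord_mul_of_isMinLen hy hx
    · rw [Set.pair_comm] at hy hx
      exact (cs.alternatingWord_mul_of_isMinLen hy hx).symm

lemma wordProd_alternatingWord_eq_swap (i j : ι) :
    cs.wordProd (alternatingWord i j (B i j)) = cs.wordProd (alternatingWord j i (B i j)) := by
  simpa [braidWord, B.symmetric j i] using cs.wordProd_braidWord_eq i j

lemma le_of_isMinLen {i j : ι} {x : H} {k : ℕ} (hij : B i j ≠ 0)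
    (hx : IsMinLen {cs.simple i, cs.simple j} x k) : k ≤ B i j := by
  induction k generalizing x with
  | zero => exact Nat.zero_le _
  | succ k ih =>
    obtain ⟨x', y, hx', hy, rfl⟩ := hx.exists_mul
    obtain ⟨m, hm⟩ := Nat.exists_eq_succ_of_ne_zero hij
    refine Nat.succ_le_of_lt ((ih hx').lt_of_ne fun hk => ?_)
    have hbraid := cs.wordProd_alternatingWord_eq_swap i j
    rw [hm] at hbraid
    have hx'ij : x' = cs.wordProd (alternatingWord i j (m + 1)) := by
      rcases cs.eq_alternatingWord_of_isMinLen hx' with h | h <;> simp [h, hk, hm, hbraid]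
    have hshort : HasLen {cs.simple i, cs.simple j} (x' * y) m := by
      rcases hy with rfl | rfl
      · rw [hx'ij, hbraid]
        exact cs.hasLen_alternatingWord_succ_mul_simple i j m
      · rw [hx'ij, Set.pair_comm]
        exact cs.hasLen_alternatingWord_succ_mul_simple j i m
    have := hx.2 m hshort
    omega

lemma eq_alternatingWord_of_isMinLen_of_lt {i j : ι} {x : H} {k : ℕ}
    (hx : IsMinLen {cs.simple i, cs.simple j} x k)
    (hxi : ∀ n, HasLen {cs.simple i, cs.simple j} (x * cs.simple i) n → k < n) :
    x = cs.wordProd (alternatingWord i j k) ∧ (B i j ≠ 0 → k < B i j) := by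
  have hswap : ∀ m, x = cs.wordProd (alternatingWord j i (m + 1)) → k < m := fun m h =>
    hxi m (h ▸ cs.hasLen_alternatingWord_succ_mul_simple i j m)
  have hx_eq : x = cs.wordProd (alternatingWord i j k) := by
    rcases cs.eq_alternatingWord_of_isMinLen hx with h | h
    · exact h
    · cases k with
      | zero => simpa [alternatingWord] using h
      | succ k => exact absurd (hswap k h) (by omega)
  refine ⟨hx_eq, fun hij => (cs.le_of_isMinLen hij hx).lt_of_ne fun hk => ?_⟩
  obtain ⟨m, hm⟩ := Nat.exists_eq_succ_of_ne_zero hij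
  have := hswap m (by rw [hx_eq, hk, cs.wordProd_alternatingWord_eq_swap, hm])
  omega

-- The factorization `w = v * x`, `x ∈ ⟨s i, s j⟩`, with `ℓ(v)` minimal, from the proof of
-- positivity of roots in Humphreys, *Reflection groups and Coxeter groups*, §5.4.
lemma exists_dihedral_factorization {w : H} {i j : ι} (hj : cs.IsRightDescent w j)
    (hi : ¬ cs.IsRightDescent w i) :
    ∃ v x k, w = v * x ∧ cs.length v < cs.length w ∧ ¬ cs.IsRightDescent v i ∧
      ¬ cs.IsRightDescent v j ∧ IsMinLen {cs.simple i, cs.simple j} x k ∧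
      ∀ n, HasLen {cs.simple i, cs.simple j} (x * cs.simple i) n → k < n := by
  set T : Set H := {cs.simple i, cs.simple j}
  have hT : T ⊆ Set.range cs.simple := by rintro _ (rfl | rfl) <;> exact Set.mem_range_self _
  have hiT : cs.simple i ∈ T := Set.mem_insert _ _
  have hjT : cs.simple j ∈ T := Set.mem_insert_of_mem _ rfl
  have hwj : ∃ x k, w = w * cs.simple j * x ∧ HasLen T x k ∧
      cs.length w = cs.length (w * cs.simple j) + k :=
    ⟨cs.simple j, 1, (cs.simple_mul_simple_cancel_right j).symm,
      by simpa using hasLen_one.mul hjT, by have := (cs.isRightDescent_iff).1 hj; omega⟩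
  obtain ⟨v, ⟨x, k, hw, hx, hlen⟩, hmin⟩ := (measure cs.length).wf.has_min
    {v | ∃ x k, w = v * x ∧ HasLen T x k ∧ cs.length w = cs.length v + k} ⟨_, hwj⟩
  replace hmin : ∀ v' ∈ _, cs.length v ≤ cs.length v' := fun v' hv' => not_lt.1 (hmin v' hv')
  have hnotdesc : ∀ l, cs.simple l ∈ T → ¬ cs.IsRightDescent v l := fun l hl hl' => by
    have hvl := (cs.isRightDescent_iff).1 hl'
    have := hmin (v * cs.simple l) ⟨cs.simple l * x, k + 1, ?_, HasLen.mul_left hl hx, ?_⟩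
    · omega
    · rw [mul_assoc, simple_mul_simple_cancel_left, hw]
    · omega
  subst hw
  refine ⟨v, x, k, rfl, ?_, hnotdesc i hiT, hnotdesc j hjT, ⟨hx, fun n hn => ?_⟩, fun n hn => ?_⟩
  · have := hmin _ hwj
    have := (cs.isRightDescent_iff).1 hj
    omega
  · have := cs.length_mul_le v x
    have := cs.length_le_of_hasLen hT hn
    omega
  · have := cs.length_mul_le v (x * cs.simple i)
    have := cs.length_le_of_hasLen hT hn
    have := (cs.not_isRightDescent_iff).1 hi
    rw [mul_assoc] at this
    omega

/-- An abstraction of the canonical (Tits) representation: the `e i` only need to be linearly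
independent, not a basis. -/
structure IsGeometricRepresentation (σ : H →* (V ≃ₗ[ℝ] V)) (F : V →ₗ[ℝ] V →ₗ[ℝ] ℝ)
    (e : ι → V) : Prop where
  apply_simple : ∀ i v, σ (cs.simple i) v = v - (2 * F (e i) v) • e i
  form_apply : ∀ i j, F (e i) (e j) = -coxeterCos (B i j)

namespace IsGeometricRepresentation

variable {cs} {σ : H →* (V ≃ₗ[ℝ] V)} {F : V →ₗ[ℝ] V →ₗ[ℝ] ℝ} {e : ι → V}

lemma isReflectionPair (hσ : cs.IsGeometricRepresentation σ F e) (i j : ι) :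
    IsReflectionPair σ F (cs.simple i) (cs.simple j) (e i) (e j) (coxeterCos (B i j)) where
  apply_left := hσ.apply_simple i
  apply_right := hσ.apply_simple j
  form_left := by rw [hσ.form_apply, B.diagonal, coxeterCos_one, neg_neg]
  form_right := by rw [hσ.form_apply, B.diagonal, coxeterCos_one, neg_neg]
  form_left_right := hσ.form_apply i j
  form_right_left := by rw [hσ.form_apply, B.symmetric]

theorem apply_mem_hull (hσ : cs.IsGeometricRepresentation σ F e) {w : H} {i : ι}
    (hi : ¬ cs.IsRightDescent w i) : σ w (e i) ∈ PointedCone.hull ℝ (Set.range e) := by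
  induction hn : cs.length w using Nat.strong_induction_on generalizing w i with
  | _ n ih =>
  rcases eq_or_ne w 1 with rfl | hw
  · simpa using PointedCone.subset_hull (Set.mem_range_self i)
  obtain ⟨j, hj⟩ := cs.exists_rightDescent_of_ne_one hw
  have hij : i ≠ j := by rintro rfl; exact hi hj
  obtain ⟨v, x, k, rfl, hvw, hvi, hvj, hx, hxi⟩ := cs.exists_dihedral_factorization hj hi
  obtain ⟨rfl, hk⟩ := cs.eq_alternatingWord_of_isMinLen_of_lt hx hxi
  obtain ⟨p, q, hp, hq, hpq⟩ :=
    (hσ.isReflectionPair i j).exists_nonneg_apply (B.off_diagonal i j hij) hk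
  rw [map_mul, LinearEquiv.mul_apply, prod_alternatingWord_eq_mul_pow, hpq, map_add, map_smul,
    map_smul]
  exact add_mem (PointedCone.smul_mem _ hp (ih _ (hn ▸ hvw) hvi rfl))
    (PointedCone.smul_mem _ hq (ih _ (hn ▸ hvw) hvj rfl))

theorem injective (hσ : cs.IsGeometricRepresentation σ F e) (he : LinearIndependent ℝ e) :
    Function.Injective σ := by
  rw [injective_iff_map_eq_one]
  intro w hw
  by_contra hne
  obtain ⟨i, hi⟩ := cs.exists_rightDescent_of_ne_one hne
  have hpos := hσ.apply_mem_hull (cs.isRightDescent_iff_not_isRightDescent_mul.1 hi)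
  have hneg : σ (w * cs.simple i) (e i) = -e i := by
    rw [map_mul, hw, one_mul, hσ.apply_simple, (hσ.isReflectionPair i i).form_left]
    module
  exact he.neg_notMem_hull i (hneg ▸ hpos)

end IsGeometricRepresentation

end CoxeterSystem

namespace CoxeterMatrix

variable {ι G : Type*} [Group G]

def ofInvolutions (t : ι → G) (ht : ∀ i, t i * t i = 1) (hinj : Function.Injective t) :
    CoxeterMatrix ι where
  M := Matrix.of fun i j => orderOf (t i * t j)
  isSymm := Matrix.IsSymm.ext fun i j => by
    rw [Matrix.of_apply, Matrix.of_apply, ← orderOf_inv, mul_inv_rev,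
      inv_eq_of_mul_eq_one_right (ht i), inv_eq_of_mul_eq_one_right (ht j)]
  diagonal i := by simp [ht i]
  off_diagonal i j hij := by
    rw [Matrix.of_apply, Ne, orderOf_eq_one_iff, mul_eq_one_iff_eq_inv,
      inv_eq_of_mul_eq_one_right (ht j)]
    exact hinj.ne hij

lemma isLiftable_ofInvolutions (t : ι → G) (ht : ∀ i, t i * t i = 1)
    (hinj : Function.Injective t) : (ofInvolutions t ht hinj).IsLiftable t :=
  fun _ _ => pow_orderOf_eq_one _

end CoxeterMatrix

lemma CoxeterSystem.range_lift {ι H G : Type*} [Group H] [Group G] {B : CoxeterMatrix ι}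
    (cs : CoxeterSystem B H) {t : ι → G} (ht : B.IsLiftable t) :
    (cs.lift ⟨t, ht⟩).range = Subgroup.closure (Set.range t) := by
  rw [MonoidHom.range_eq_map, ← cs.subgroup_closure_range_simple, MonoidHom.map_closure,
    ← Set.range_comp, show ⇑(cs.lift ⟨t, ht⟩) ∘ cs.simple = t from funext (cs.lift_apply_simple ht)]

lemma bform_simpleRoot (M : CoxeterMatrix S) (s t : S) :
    bform M (simpleRoot s) (simpleRoot t) = -coxeterCos (M s t) := by
  have hα : ∀ u : S, simpleRoot u = Finsupp.basisSingleOne u := fun u => by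
    rw [Finsupp.coe_basisSingleOne]; rfl
  rw [bform, hα, hα, Module.Basis.constr_basis, Module.Basis.constr_basis, formEntry, coxeterCos]
  split_ifs <;> simp

section RootReflections

variable {M : CoxeterMatrix S} {cs : CoxeterSystem M W} {ρ : W →* ((S →₀ ℝ) ≃ₗ[ℝ] (S →₀ ℝ))}

lemma isReflectionPair_conj_simple
    (hρ : ∀ (s : S) (v : S →₀ ℝ),
      ρ (cs.simple s) v = v - (2 * bform M (simpleRoot s) v) • simpleRoot s)
    (hρform : ∀ (w : W) (x y : S →₀ ℝ), bform M (ρ w x) (ρ w y) = bform M x y)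
    (w : W) (s t : S) :
    IsReflectionPair ρ (bform M) (w * cs.simple s * w⁻¹) (w * cs.simple t * w⁻¹)
      (ρ w (simpleRoot s)) (ρ w (simpleRoot t)) (coxeterCos (M s t)) := by
  have hww : ∀ v, ρ w (ρ w⁻¹ v) = v := fun v => by
    rw [← LinearEquiv.mul_apply, ← map_mul, mul_inv_cancel, map_one]
    rfl
  have hconj : ∀ u v, ρ (w * cs.simple u * w⁻¹) v =
      v - (2 * bform M (ρ w (simpleRoot u)) v) • ρ w (simpleRoot u) := fun u v => by
    have hcoef : bform M (ρ w (simpleRoot u)) v = bform M (simpleRoot u) (ρ w⁻¹ v) := by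
      rw [← hρform w (simpleRoot u), hww]
    rw [hcoef, map_mul, map_mul, LinearEquiv.mul_apply, LinearEquiv.mul_apply, hρ, map_sub,
      map_smul, hww]
  exact {
    apply_left := hconj s
    apply_right := hconj t
    form_left := by rw [hρform, bform_simpleRoot, M.diagonal, coxeterCos_one, neg_neg]
    form_right := by rw [hρform, bform_simpleRoot, M.diagonal, coxeterCos_one, neg_neg]
    form_left_right := by rw [hρform, bform_simpleRoot]
    form_right_left := by rw [hρform, bform_simpleRoot, M.symmetric] }

lemma IsAP.reflection_mul_self {r : (S →₀ ℝ) → W}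
    (hr : ∀ (w : W) (s : S), r (ρ w (simpleRoot s)) = w * cs.simple s * w⁻¹)
    {𝒳 : Set (S →₀ ℝ)} (hAP : IsAP ρ 𝒳) {β : S →₀ ℝ} (hβ : β ∈ 𝒳) : r β * r β = 1 := by
  obtain ⟨w, s, -, rfl, -⟩ := hAP.2 _ hβ _ hβ
  calc r (ρ w (simpleRoot s)) * r (ρ w (simpleRoot s))
      = w * (cs.simple s * cs.simple s) * w⁻¹ := by rw [hr]; group
    _ = 1 := by rw [cs.simple_mul_simple_self, mul_one, mul_inv_cancel]

lemma IsAP.isReflectionPair_and_orderOf_ne_one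
    (hρ : ∀ (s : S) (v : S →₀ ℝ),
      ρ (cs.simple s) v = v - (2 * bform M (simpleRoot s) v) • simpleRoot s)
    (hρform : ∀ (w : W) (x y : S →₀ ℝ), bform M (ρ w x) (ρ w y) = bform M x y)
    {r : (S →₀ ℝ) → W} (hr : ∀ (w : W) (s : S), r (ρ w (simpleRoot s)) = w * cs.simple s * w⁻¹)
    {𝒳 : Set (S →₀ ℝ)} (hAP : IsAP ρ 𝒳) {β γ : S →₀ ℝ} (hβ : β ∈ 𝒳) (hγ : γ ∈ 𝒳) :
    IsReflectionPair ρ (bform M) (r β) (r γ) β γ (coxeterCos (orderOf (r β * r γ))) ∧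
      (β ≠ γ → orderOf (r β * r γ) ≠ 1) := by
  obtain ⟨w, s, t, rfl, rfl⟩ := hAP.2 _ hβ _ hγ
  have hp := isReflectionPair_conj_simple hρ hρform w s t
  rw [hr, hr]
  have hconj : w * cs.simple s * w⁻¹ * (w * cs.simple t * w⁻¹) =
      w * (cs.simple s * cs.simple t) * w⁻¹ := by group
  have hrel := cs.simple_mul_simple_pow s t
  rcases eq_or_ne s t with rfl | hst
  · rw [hconj, cs.simple_mul_simple_self, mul_one, mul_inv_cancel, orderOf_one, ← M.diagonal s]
    exact ⟨hp, fun h => absurd rfl h⟩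
  have hne : ρ w (simpleRoot s) ≠ ρ w (simpleRoot t) :=
    ((ρ w).injective.comp (Finsupp.single_left_injective one_ne_zero)).ne hst
  have hind : LinearIndependent ℝ ![ρ w (simpleRoot s), ρ w (simpleRoot t)] :=
    LinearIndependent.pair_iff.2 <| (LinearIndepOn.pair_iff id hne).1 <|
      LinearIndepOn.mono (s := 𝒳) hAP.1
        (Set.insert_subset_iff.2 ⟨hβ, Set.singleton_subset_iff.2 hγ⟩)
  have ho := hp.orderOf_mul_eq hind (M.off_diagonal s t hst)
    (by rw [hconj, conj_pow, hrel, mul_one, mul_inv_cancel])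
  rw [ho]
  exact ⟨hp, fun _ => M.off_diagonal s t hst⟩

end RootReflections

theorem statement0_general
    (M : CoxeterMatrix S) (cs : CoxeterSystem M W)
    (ρ : W →* ((S →₀ ℝ) ≃ₗ[ℝ] (S →₀ ℝ)))
    (hρ : ∀ (s : S) (v : S →₀ ℝ),
      ρ (cs.simple s) v = v - (2 * bform M (simpleRoot s) v) • simpleRoot s)
    (hρform : ∀ (w : W) (x y : S →₀ ℝ), bform M (ρ w x) (ρ w y) = bform M x y)
    (r : (S →₀ ℝ) → W)
    (hr : ∀ (w : W) (s : S), r (ρ w (simpleRoot s)) = w * cs.simple s * w⁻¹)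
    (𝒳 : Set (S →₀ ℝ)) (hAP : IsAP ρ 𝒳) :
    ∃ (M𝒳 : CoxeterMatrix ↥𝒳) (f : M𝒳.Group →* W),
      (∀ β γ : ↥𝒳, M𝒳 β γ = orderOf (r ↑β * r ↑γ)) ∧
      (∀ β : ↥𝒳, f (M𝒳.simple β) = r ↑β) ∧
      Function.Injective f ∧
      f.range = Subgroup.closure (r '' 𝒳) := by
  have hpair (β γ : 𝒳) := hAP.isReflectionPair_and_orderOf_ne_one hρ hρform hr β.2 γ.2
  have hsq (β : 𝒳) : r β * r β = 1 := hAP.reflection_mul_self hr β.2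
  have hinj : Function.Injective fun β : 𝒳 => r β := fun β γ h => by
    by_contra hne
    refine (hpair β γ).2 (Subtype.coe_injective.ne hne) ?_
    rw [show r β = r γ from h, hsq γ, orderOf_one]
  set M𝒳 := CoxeterMatrix.ofInvolutions (fun β : 𝒳 => r β) hsq hinj
  have hlift := CoxeterMatrix.isLiftable_ofInvolutions _ hsq hinj
  set f := M𝒳.toCoxeterSystem.lift ⟨_, hlift⟩
  have hf (β : 𝒳) : f (M𝒳.simple β) = r β := M𝒳.toCoxeterSystem.lift_apply_simple hlift β
  have hσ : M𝒳.toCoxeterSystem.IsGeometricRepresentation (ρ.comp f) (bform M) (↑) :=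
    ⟨fun β => by simpa [hf] using (hpair β β).1.apply_left,
      fun β γ => (hpair β γ).1.form_left_right⟩
  refine ⟨M𝒳, f, fun _ _ => rfl, hf, Function.Injective.of_comp (f := ρ) (hσ.injective hAP.1), ?_⟩
  rw [CoxeterSystem.range_lift, Set.image_eq_range]

/-- If `𝒳 ⊆ Φ` is almost parabolic, then, setting `m_{β,γ}` to be the order
of `r_β · r_γ` in `W`, the matrix `M_𝒳 = (m_{β,γ})` is a Coxeter matrix on `𝒳`, and the
group homomorphism from the abstract Coxeter group of `M_𝒳` to `W` determined by
`q_β ↦ r_β` is injective with image `W_𝒳 = ⟨R_𝒳⟩`; i.e. `(W_𝒳, R_𝒳)` is a Coxeter system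
with Coxeter matrix `M_𝒳`. -/
theorem statement0
    (M : CoxeterMatrix S) (cs : CoxeterSystem M W)
    (ρ : W →* ((S →₀ ℝ) ≃ₗ[ℝ] (S →₀ ℝ)))
    (hρ : ∀ (s : S) (v : S →₀ ℝ),
      ρ (cs.simple s) v = v - (2 * bform M (simpleRoot s) v) • simpleRoot s)
    (hρinj : Function.Injective ρ)
    (hρform : ∀ (w : W) (x y : S →₀ ℝ), bform M (ρ w x) (ρ w y) = bform M x y)
    (r : (S →₀ ℝ) → W)
    (hr : ∀ (w : W) (s : S), r (ρ w (simpleRoot s)) = w * cs.simple s * w⁻¹)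
    (𝒳 : Set (S →₀ ℝ)) (h𝒳Φ : 𝒳 ⊆ rootSystem ρ) (hAP : IsAP ρ 𝒳) :
    ∃ (M𝒳 : CoxeterMatrix ↥𝒳) (f : M𝒳.Group →* W),
      (∀ β γ : ↥𝒳, M𝒳 β γ = orderOf (r ↑β * r ↑γ)) ∧
      (∀ β : ↥𝒳, f (M𝒳.simple β) = r ↑β) ∧
      Function.Injective f ∧
      f.range = Subgroup.closure (r '' 𝒳) :=
  statement0_general M cs ρ hρ hρform r hr 𝒳 hAP
end
end

section
/- Let Γ be of spherical type and X ⊆ S. Then ⟨α_s, o − o_X⟩ = 0 for every s ∈ X, and consequently the translation of V by the vector o − o_X commutes with the action of every element of W_X: w(v + (o − o_X)) = w(v) + (o − o_X) for all w ∈ W_X and v ∈ V. In particular this translation sends w(o_X) to w(o) for every w ∈ W_X, and hence maps C[X] = conv{w(o_X) : w ∈ W_X} isometrically onto the face F(id,X,S) = conv{w(o) : w ∈ W_X} of C[S]. -/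
/-!
Context: `(W, S)` is a Coxeter system for the Coxeter matrix `M` (Mathlib's convention:
the entry `0` encodes `∞`).  `V = ⊕_{s ∈ S} ℝ·α_s` is realized as `S →₀ ℝ` with
`α_s = simpleRoot s`, equipped with the canonical symmetric bilinear form `bform M`.
The canonical faithful form-preserving representation `ρ : W →* GL(V)` and the map
`β ↦ r_β` assigning to each root its reflection are given as data, characterized by
the usual formulas (`hρ`, `hρinj`, `hρform`, `hr` below).
-/

noncomputable section

open scoped Real Pointwise

variable {S W : Type*}

variable [Group W]

lemma bform_simpleRoot_simpleRoot (M : CoxeterMatrix S) (s t : S) :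
    bform M (simpleRoot s) (simpleRoot t) = formEntry M s t := by
  have h (u : S) : simpleRoot u = Finsupp.basisSingleOne u := rfl
  rw [h, h, bform, Module.Basis.constr_basis, Module.Basis.constr_basis]

lemma bform_flip (M : CoxeterMatrix S) : (bform M).flip = bform M :=
  LinearMap.ext_basis Finsupp.basisSingleOne Finsupp.basisSingleOne fun s t => by
    change bform M (simpleRoot t) (simpleRoot s) = bform M (simpleRoot s) (simpleRoot t)
    simp only [bform_simpleRoot_simpleRoot, formEntry, M.symmetric t s]

lemma bform_comm (M : CoxeterMatrix S) (x y : S →₀ ℝ) : bform M x y = bform M y x :=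
  LinearMap.congr_fun₂ (bform_flip M) y x

lemma apply_eq_self_of_bform_simpleRoot_eq_zero {M : CoxeterMatrix S}
    (cs : CoxeterSystem M W) (ρ : W →* ((S →₀ ℝ) ≃ₗ[ℝ] (S →₀ ℝ)))
    (hρ : ∀ (s : S) (v : S →₀ ℝ),
      ρ (cs.simple s) v = v - (2 * bform M (simpleRoot s) v) • simpleRoot s)
    {X : Set S} {d : S →₀ ℝ} (hd : ∀ s ∈ X, bform M (simpleRoot s) d = 0) :
    ∀ w ∈ Subgroup.closure (cs.simple '' X), ρ w d = d := by
  suffices Subgroup.closure (cs.simple '' X) ≤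
      (MulAction.stabilizer ((S →₀ ℝ) ≃ₗ[ℝ] (S →₀ ℝ)) d).comap ρ from
    fun w hw => this hw
  rw [Subgroup.closure_le]
  rintro _ ⟨s, hs, rfl⟩
  simp [MulAction.mem_stabilizer_iff, hρ s d, hd s hs]

lemma image_add_right_convexHull {E : Type*} [AddCommGroup E] [Module ℝ E] (d : E)
    (s : Set E) : (· + d) '' convexHull ℝ s = convexHull ℝ ((· + d) '' s) := by
  simpa [add_comm] using (AffineEquiv.constVAdd ℝ E d).toAffineMap.image_convexHull s

theorem statement10_general
    (M : CoxeterMatrix S) (cs : CoxeterSystem M W)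
    (ρ : W →* ((S →₀ ℝ) ≃ₗ[ℝ] (S →₀ ℝ)))
    (hρ : ∀ (s : S) (v : S →₀ ℝ),
      ρ (cs.simple s) v = v - (2 * bform M (simpleRoot s) v) • simpleRoot s)
    (o : S →₀ ℝ) (ho : ∀ t : S, bform M o (simpleRoot t) = 1)
    (X : Set S)
    (oX : S →₀ ℝ)
    (hoX : ∀ t ∈ X, bform M oX (simpleRoot t) = 1) :
    (∀ s ∈ X, bform M (simpleRoot s) (o - oX) = 0) ∧
    (∀ w ∈ Subgroup.closure (cs.simple '' X), ∀ v : S →₀ ℝ,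
      ρ w (v + (o - oX)) = ρ w v + (o - oX)) ∧
    (∀ w ∈ Subgroup.closure (cs.simple '' X), ρ w oX + (o - oX) = ρ w o) ∧
    (fun v : S →₀ ℝ => v + (o - oX)) ''
        (convexHull ℝ ((fun w : W => ρ w oX) ''
          ((Subgroup.closure (cs.simple '' X) : Set W)))) =
      convexHull ℝ ((fun w : W => ρ w o) ''
        ((Subgroup.closure (cs.simple '' X) : Set W))) := by
  have horth : ∀ s ∈ X, bform M (simpleRoot s) (o - oX) = 0 := fun s hs => by
    rw [map_sub, bform_comm, ho, bform_comm, hoX s hs, sub_self]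
  have hfix := apply_eq_self_of_bform_simpleRoot_eq_zero cs ρ hρ horth
  have htrans : ∀ w ∈ Subgroup.closure (cs.simple '' X), ∀ v : S →₀ ℝ,
      ρ w (v + (o - oX)) = ρ w v + (o - oX) := fun w hw v => by
    rw [map_add, hfix w hw]
  have hvert : ∀ w ∈ Subgroup.closure (cs.simple '' X), ρ w oX + (o - oX) = ρ w o :=
    fun w hw => by rw [← htrans w hw, add_sub_cancel]
  refine ⟨horth, htrans, hvert, ?_⟩
  rw [image_add_right_convexHull, Set.image_image]
  exact congrArg _ (Set.image_congr hvert)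

/-- Let `Γ` be of spherical type (`W` finite) and `X ⊆ S`.  Then
`⟨α_s, o − o_X⟩ = 0` for every `s ∈ X`; consequently the translation by `o − o_X` commutes
with the action of every `w ∈ W_X`, sends `w (o_X)` to `w (o)` for every `w ∈ W_X`, and maps
`C[X] = conv{w (o_X) : w ∈ W_X}` isometrically onto the face
`F(id, X, S) = conv{w (o) : w ∈ W_X}` of `C[S]`.  (Here `o` is characterized by
`⟨o, α_t⟩ = 1` for all `t ∈ S`, and `o_X` by `o_X ∈ span Π_X` and `⟨o_X, α_t⟩ = 1` for all
`t ∈ X`.) -/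
theorem statement10
    (M : CoxeterMatrix S) (cs : CoxeterSystem M W) [Finite W]
    (ρ : W →* ((S →₀ ℝ) ≃ₗ[ℝ] (S →₀ ℝ)))
    (hρ : ∀ (s : S) (v : S →₀ ℝ),
      ρ (cs.simple s) v = v - (2 * bform M (simpleRoot s) v) • simpleRoot s)
    (hρinj : Function.Injective ρ)
    (hρform : ∀ (w : W) (x y : S →₀ ℝ), bform M (ρ w x) (ρ w y) = bform M x y)
    (o : S →₀ ℝ) (ho : ∀ t : S, bform M o (simpleRoot t) = 1)
    (X : Set S)
    (oX : S →₀ ℝ) (hoXspan : oX ∈ Submodule.span ℝ (simpleRoot '' X))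
    (hoX : ∀ t ∈ X, bform M oX (simpleRoot t) = 1) :
    (∀ s ∈ X, bform M (simpleRoot s) (o - oX) = 0) ∧
    (∀ w ∈ Subgroup.closure (cs.simple '' X), ∀ v : S →₀ ℝ,
      ρ w (v + (o - oX)) = ρ w v + (o - oX)) ∧
    (∀ w ∈ Subgroup.closure (cs.simple '' X), ρ w oX + (o - oX) = ρ w o) ∧
    (fun v : S →₀ ℝ => v + (o - oX)) ''
        (convexHull ℝ ((fun w : W => ρ w oX) ''
          ((Subgroup.closure (cs.simple '' X) : Set W)))) =
      convexHull ℝ ((fun w : W => ρ w o) ''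
        ((Subgroup.closure (cs.simple '' X) : Set W))) :=
  statement10_general M cs ρ hρ o ho X oX hoX
end
end

section
/- Let (W,S) be a Coxeter system, X,Y ⊆ S, and u,v ∈ W with uW_Xu⁻¹ = vW_Yv⁻¹, where W_X and W_Y are the standard parabolic subgroups generated by X and Y. Let w₀ be an element of minimal length in the double coset W_Y(v⁻¹u)W_X. Then w₀Xw₀⁻¹ = Y. -/
/-!
Tits' action of `W` on `W × ZMod 2` (the simple reflection `s i` conjugates the first coordinate
and flips the second one exactly when the first one is `s i`) shows that the parity of the number
of occurrences of a reflection in the right inversion sequence of a word depends only on the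
product of the word. This gives the exchange condition, hence reduced words of elements of `W_X`
only use letters of `X`, and `ℓ (d * a) = ℓ d + ℓ a` for `a ∈ W_X` when `d` is of minimal length
in `d W_X`.

Now `w₀` conjugates `W_X` onto `W_Y`. For `x ∈ X`, `p = w₀ s_x w₀⁻¹ ∈ W_Y` satisfies
`ℓ w₀ + ℓ p = ℓ (w₀⁻¹ p) = ℓ (s_x w₀⁻¹) = ℓ w₀ + 1`, so `p` is a simple reflection lying in `W_Y`,
i.e. `p ∈ s(Y)`. Applying this to `w₀⁻¹`, which is minimal in `W_X w₀⁻¹ W_Y`, gives the reverse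
inclusion.
-/

open List

open scoped Pointwise in
theorem Subgroup.map_conj_mul_mul_eq {G : Type*} [Group G] {H K : Subgroup G} {u v a b : G}
    (h : H.map (MulAut.conj u).toMonoidHom = K.map (MulAut.conj v).toMonoidHom)
    (ha : a ∈ K) (hb : b ∈ H) :
    H.map (MulAut.conj (a * (v⁻¹ * u) * b)).toMonoidHom = K := by
  change MulAut.conj u • H = MulAut.conj v • K at h
  change MulAut.conj (a * (v⁻¹ * u) * b) • H = K
  rw [map_mul, map_mul, map_mul, mul_smul, mul_smul, mul_smul,
    conj_smul_eq_self_of_mem hb, h, map_inv, inv_smul_smul,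
    conj_smul_eq_self_of_mem ha]

namespace CoxeterSystem

variable {B W : Type*} [Group W] {M : CoxeterMatrix B} (cs : CoxeterSystem M W)

local prefix:100 "s" => cs.simple
local prefix:100 "π" => cs.wordProd
local prefix:100 "ℓ" => cs.length
local prefix:100 "ris " => cs.rightInvSeq
local prefix:100 "lis " => cs.leftInvSeq

section SignRepresentation

open scoped Classical

theorem alternatingWord_two_mul_add_two (i j : B) (m : ℕ) :
    alternatingWord i j (2 * m + 2) = i :: j :: alternatingWord i j (2 * m) := by
  simp [alternatingWord_succ']

theorem prod_map_alternatingWord {G : Type*} [Monoid G] (f : B → G) (i j : B) (m : ℕ) :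
    ((alternatingWord i j (2 * m)).map f).prod = (f i * f j) ^ m := by
  induction m with
  | zero => simp [alternatingWord]
  | succ m ih => simp [mul_add_one, alternatingWord_two_mul_add_two, pow_succ', ← ih, mul_assoc]

theorem reverse_alternatingWord (i j : B) (m : ℕ) :
    (alternatingWord i j (2 * m)).reverse = alternatingWord j i (2 * m) := by
  induction m with
  | zero => simp [alternatingWord]
  | succ m ih =>
    rw [mul_add_one, alternatingWord_two_mul_add_two]
    simp [ih, alternatingWord_succ]

theorem leftInvSeq_alternatingWord (i j : B) (m : ℕ) :
    lis (alternatingWord i j (2 * m)) =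
      (range (2 * m)).map fun k => s i * (s j * s i) ^ k := by
  refine ext_getElem (by simp) fun k hk _ => ?_
  rw [getElem_leftInvSeq_alternatingWord cs i j m k (by simpa using hk),
    prod_alternatingWord_eq_mul_pow]
  simp [Nat.mul_add_div]

theorem even_count_rightInvSeq_alternatingWord (i j : B) (t : W) :
    Even ((ris (alternatingWord i j (2 * M i j))).count t) := by
  -- the inversion sequence lists the `M i j` reflections of the dihedral subgroup twice
  have hper (k : ℕ) : (s i * s j) ^ (M i j + k) = (s i * s j) ^ k := by
    rw [pow_add, simple_mul_simple_pow, one_mul]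
  rw [← reverse_alternatingWord, rightInvSeq_reverse, count_reverse, leftInvSeq_alternatingWord,
    two_mul, range_add, map_append, map_map]
  simp only [Function.comp_def, hper, count_append]
  exact Even.add_self _

noncomputable def signPerm (i : B) : Equiv.Perm (W × ZMod 2) :=
  Function.Involutive.toPerm
    (fun p => (s i * p.1 * s i, p.2 + if p.1 = s i then 1 else 0)) <| by
    rintro ⟨t, e⟩
    have : s i * t * s i = s i ↔ t = s i := by
      constructor <;> intro h
      · simpa [mul_assoc] using congr_arg (fun x => s i * x * s i) h
      · simp [h]
    ext
    · simp [mul_assoc]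
    · by_cases h : t = s i <;> simp [this, h, add_assoc, CharTwo.add_self_eq_zero]

theorem signPerm_apply (i : B) (t : W) (e : ZMod 2) :
    cs.signPerm i (t, e) = (s i * t * s i, e + if t = s i then 1 else 0) := rfl

theorem prod_map_signPerm_apply (ω : List B) (t : W) (e : ZMod 2) :
    (ω.map cs.signPerm).prod (t, e) = (π ω * t * (π ω)⁻¹, e + (ris ω).count t) := by
  induction ω with
  | nil => simp
  | cons i ω ih =>
    rw [map_cons, prod_cons, Equiv.Perm.mul_apply, ih, signPerm_apply, wordProd_cons]
    have : π ω * t * (π ω)⁻¹ = s i ↔ (π ω)⁻¹ * s i * π ω = t := by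
      constructor <;> intro h <;> rw [← h] <;> group
    ext
    · simp [mul_assoc]
    · simp [rightInvSeq, count_cons, this, add_assoc]

theorem isLiftable_signPerm : M.IsLiftable cs.signPerm := by
  intro i j
  have hπ : π (alternatingWord i j (2 * M i j)) = 1 := by
    rw [wordProd, prod_map_alternatingWord, simple_mul_simple_pow]
  ext ⟨t, e⟩
  · rw [← prod_map_alternatingWord, prod_map_signPerm_apply, hπ]
    simp
  · rw [← prod_map_alternatingWord, prod_map_signPerm_apply,
      (ZMod.natCast_eq_zero_iff_even).2 (cs.even_count_rightInvSeq_alternatingWord i j t)]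
    simp

noncomputable def signRep : W →* Equiv.Perm (W × ZMod 2) :=
  cs.lift ⟨cs.signPerm, cs.isLiftable_signPerm⟩

theorem signRep_wordProd (ω : List B) : cs.signRep (π ω) = (ω.map cs.signPerm).prod := by
  simp [signRep, wordProd, map_list_prod, Function.comp_def, lift_apply_simple]

theorem count_rightInvSeq_congr {ω ω' : List B} (h : π ω = π ω') (t : W) :
    ((ris ω).count t : ZMod 2) = (ris ω').count t := by
  simpa [signRep_wordProd, prod_map_signPerm_apply] using
    congr_arg (fun w => (cs.signRep w (t, 0)).2) h

theorem simple_mem_rightInvSeq_of_isRightDescent {ω : List B} {i : B}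
    (h : cs.IsRightDescent (π ω) i) : s i ∈ ris ω := by
  -- for reduced `ν`, `ν.concat i` is a word for `π ω` whose inversion sequence contains `s i`
  -- exactly once, so by parity `s i` occurs in `ris ω` as well
  obtain ⟨ν, hν, hνω⟩ := cs.exists_isReduced (π ω * s i)
  have hνi : π (ν.concat i) = π ω := by
    rw [wordProd_concat, ← hνω, simple_mul_simple_cancel_right]
  have hnot : s i ∉ ris ν := fun hmem => by
    have := (cs.isRightInversion_of_mem_rightInvSeq hν hmem).2
    rw [← hνω, simple_mul_simple_cancel_right] at this
    exact lt_asymm h this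
  have hcount : (ris (ν.concat i)).count (s i) = 1 := by
    have hconj : MulAut.conj (s i) (s i) = s i := by simp
    rw [rightInvSeq_concat, concat_eq_append, count_append]
    nth_rw 1 [← hconj]
    rw [count_map_of_injective _ _ (MulAut.conj (s i)).injective, count_eq_zero.2 hnot]
    simp
  by_contra hmem
  have := cs.count_rightInvSeq_congr hνi (s i)
  rw [hcount, count_eq_zero.2 hmem] at this
  exact absurd this (by decide)

theorem exists_eraseIdx_of_isRightDescent {ω : List B} {i : B} (h : cs.IsRightDescent (π ω) i) :
    ∃ j < ω.length, π ω * s i = π (ω.eraseIdx j) := by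
  obtain ⟨j, hj, hget⟩ := mem_iff_getElem.mp (cs.simple_mem_rightInvSeq_of_isRightDescent h)
  refine ⟨j, by simpa using hj, ?_⟩
  rw [← hget, ← getD_eq_getElem _ 1 hj, wordProd_mul_getD_rightInvSeq]

end SignRepresentation

def parabolicSubgroup (X : Set B) : Subgroup W := Subgroup.closure (cs.simple '' X)

local notation "P" => cs.parabolicSubgroup

theorem simple_mem_parabolicSubgroup {X : Set B} {x : B} (hx : x ∈ X) : s x ∈ P X :=
  Subgroup.subset_closure ⟨x, hx, rfl⟩

@[elab_as_elim]
theorem parabolicSubgroup_induction {X : Set B} {p : W → Prop} (one : p 1)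
    (mul_simple : ∀ w ∈ P X, ∀ x ∈ X, p w → p (w * s x)) {w : W} (hw : w ∈ P X) : p w := by
  induction hw using Subgroup.closure_induction_right with
  | one => exact one
  | mul_right w hw _ hx ih =>
    obtain ⟨x, hx, rfl⟩ := hx
    exact mul_simple w hw x hx ih
  | mul_inv_cancel w hw _ hx ih =>
    obtain ⟨x, hx, rfl⟩ := hx
    rw [inv_simple]
    exact mul_simple w hw x hx ih

theorem exists_isReduced_of_mem_parabolicSubgroup {X : Set B} {w : W} (hw : w ∈ P X) :
    ∃ ω, cs.IsReduced ω ∧ (∀ x ∈ ω, x ∈ X) ∧ π ω = w := by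
  refine cs.parabolicSubgroup_induction ⟨[], by simp [IsReduced], by simp, rfl⟩
    (fun w _ x hx ih => ?_) hw
  obtain ⟨ω, hred, hωX, rfl⟩ := ih
  rcases cs.length_mul_simple (π ω) x with hlen | hlen
  · refine ⟨ω.concat x, ?_, ?_, wordProd_concat ..⟩
    · rw [IsReduced, wordProd_concat, hlen, hred.eq, length_concat]
    · simpa [or_imp, forall_and] using And.intro hωX hx
  · obtain ⟨j, hj, heq⟩ := cs.exists_eraseIdx_of_isRightDescent (by omega : ℓ (π ω * s x) < _)
    refine ⟨ω.eraseIdx j, ?_, fun y hy => hωX y (eraseIdx_subset hy), heq.symm⟩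
    rw [IsReduced, ← heq, length_eraseIdx_of_lt hj]
    have := hred.eq
    omega

theorem simple_mem_parabolicSubgroup_iff {X : Set B} {i : B} :
    s i ∈ P X ↔ s i ∈ cs.simple '' X := by
  refine ⟨fun h => ?_, fun ⟨x, hx, hxi⟩ => hxi ▸ cs.simple_mem_parabolicSubgroup hx⟩
  obtain ⟨ω, hred, hωX, hω⟩ := cs.exists_isReduced_of_mem_parabolicSubgroup h
  obtain ⟨x, rfl⟩ : ∃ x, ω = [x] := by
    rw [← List.length_eq_one_iff, ← hred.eq, hω, length_simple]
  exact ⟨x, hωX x (mem_singleton_self x), by simpa using hω⟩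

theorem isRightDescent_or_exists_of_isRightDescent_mul {u v : W} {i : B}
    (huv : ℓ (u * v) = ℓ u + ℓ v) (h : cs.IsRightDescent (u * v) i) :
    cs.IsRightDescent v i ∨ ∃ u', ℓ u' < ℓ u ∧ u * v * s i = u' * v := by
  obtain ⟨μ, hμ, rfl⟩ := cs.exists_isReduced u
  obtain ⟨ν, hν, rfl⟩ := cs.exists_isReduced v
  rw [← wordProd_append] at h
  obtain ⟨j, hj, heq⟩ := cs.exists_eraseIdx_of_isRightDescent h
  rw [wordProd_append] at heq
  have hlen (κ : List B) (k : ℕ) (hk : k < κ.length) : ℓ (π (κ.eraseIdx k)) < κ.length :=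
    (cs.length_wordProd_le _).trans_lt (by rw [length_eraseIdx_of_lt hk]; omega)
  rcases lt_or_ge j μ.length with hjμ | hjμ
  · rw [eraseIdx_append_of_lt_length hjμ, wordProd_append] at heq
    exact .inr ⟨_, hμ.eq ▸ hlen μ j hjμ, heq⟩
  · rw [eraseIdx_append_of_length_le hjμ, wordProd_append, mul_assoc, mul_right_inj] at heq
    refine .inl ?_
    rw [IsRightDescent, heq, hν.eq]
    exact hlen ν _ (by simp at hj; omega)

theorem length_mul_eq_add_of_forall_length_le_mul {X : Set B} {d a : W}
    (hd : ∀ b ∈ P X, ℓ d ≤ ℓ (d * b)) (ha : a ∈ P X) : ℓ (d * a) = ℓ d + ℓ a := by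
  refine cs.parabolicSubgroup_induction (by simp) (fun a ha x hx ih => ?_) ha
  have hle := cs.length_mul_le d (a * s x)
  rw [← mul_assoc] at hle ⊢
  have hdax := cs.length_mul_simple (d * a) x
  rcases cs.length_mul_simple a x with hax | hax
  · suffices ¬ cs.IsRightDescent (d * a) x by rw [IsRightDescent] at this; omega
    intro hdesc
    rcases cs.isRightDescent_or_exists_of_isRightDescent_mul (i := x) ih
      hdesc with hdesc | ⟨u', hu', heq⟩
    · rw [IsRightDescent] at hdesc; omega
    · have := hd _ (mul_mem (mul_mem ha (cs.simple_mem_parabolicSubgroup hx)) (inv_mem ha))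
      rw [show d * (a * s x * a⁻¹) = u' by rw [← mul_inv_eq_iff_eq_mul.2 heq]; group] at this
      omega
  · omega

def IsMinimalInDoubleCoset (Y X : Set B) (w : W) : Prop :=
  ∀ a ∈ P Y, ∀ b ∈ P X, ℓ w ≤ ℓ (a * w * b)

theorem IsMinimalInDoubleCoset.inv {cs : CoxeterSystem M W} {X Y : Set B} {w : W}
    (hw : cs.IsMinimalInDoubleCoset Y X w) : cs.IsMinimalInDoubleCoset X Y w⁻¹ := by
  intro a ha b hb
  calc cs.length w⁻¹ = cs.length w := cs.length_inv w
    _ ≤ cs.length (b⁻¹ * w * a⁻¹) := hw b⁻¹ (inv_mem hb) a⁻¹ (inv_mem ha)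
    _ = cs.length (a * w⁻¹ * b) := by rw [← cs.length_inv]; group

theorem conj_image_simple_subset {X Y : Set B} {w : W} (hw : cs.IsMinimalInDoubleCoset Y X w)
    (hconj : ∀ g ∈ P X, w * g * w⁻¹ ∈ P Y) :
    (fun g => w * g * w⁻¹) '' (cs.simple '' X) ⊆ cs.simple '' Y := by
  rintro _ ⟨_, ⟨x, hx, rfl⟩, rfl⟩
  change w * s x * w⁻¹ ∈ _
  have hsx := cs.simple_mem_parabolicSubgroup hx
  have hp := hconj _ hsx
  have hwx : ℓ (w * s x) = ℓ w + 1 := (cs.length_mul_simple w x).resolve_right fun h => by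
    have := hw 1 (one_mem _) _ hsx
    rw [one_mul] at this
    omega
  have hadd := cs.length_mul_eq_add_of_forall_length_le_mul (d := w⁻¹)
    (fun b hb => by simpa using hw.inv 1 (one_mem _) b hb) hp
  rw [show w⁻¹ * (w * s x * w⁻¹) = (w * s x)⁻¹ by rw [mul_inv_rev, inv_simple]; group,
    length_inv, length_inv, hwx] at hadd
  obtain ⟨k, hk⟩ := cs.length_eq_one_iff.1 (show ℓ (w * s x * w⁻¹) = 1 by omega)
  rw [hk] at hp ⊢
  exact cs.simple_mem_parabolicSubgroup_iff.1 hp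

theorem conj_image_simple_eq {X Y : Set B} {w : W} (hw : cs.IsMinimalInDoubleCoset Y X w)
    (hconj : (P X).map (MulAut.conj w).toMonoidHom = P Y) :
    (fun g => w * g * w⁻¹) '' (cs.simple '' X) = cs.simple '' Y := by
  have hXY (g : W) (hg : g ∈ P X) : w * g * w⁻¹ ∈ P Y := hconj ▸ Subgroup.mem_map_of_mem _ hg
  have hYX (g : W) (hg : g ∈ P Y) : w⁻¹ * g * w⁻¹⁻¹ ∈ P X := by
    rw [← hconj] at hg
    obtain ⟨g, hg, rfl⟩ := hg
    simpa [mul_assoc] using hg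
  refine (cs.conj_image_simple_subset hw hXY).antisymm fun g hg => ?_
  exact ⟨w⁻¹ * g * w, cs.conj_image_simple_subset hw.inv hYX ⟨g, hg, by group⟩, by group⟩

end CoxeterSystem

theorem statement14 {S W : Type*} [Group W] {M : CoxeterMatrix S}
    (cs : CoxeterSystem M W) (X Y : Set S) (u v w₀ : W)
    (hconj : Subgroup.map (MulAut.conj u).toMonoidHom (Subgroup.closure (cs.simple '' X)) =
      Subgroup.map (MulAut.conj v).toMonoidHom (Subgroup.closure (cs.simple '' Y)))
    (hmem : w₀ ∈ {g : W | ∃ a ∈ Subgroup.closure (cs.simple '' Y),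
      ∃ b ∈ Subgroup.closure (cs.simple '' X), g = a * (v⁻¹ * u) * b})
    (hmin : ∀ g ∈ {g : W | ∃ a ∈ Subgroup.closure (cs.simple '' Y),
      ∃ b ∈ Subgroup.closure (cs.simple '' X), g = a * (v⁻¹ * u) * b},
      cs.length w₀ ≤ cs.length g) :
    (fun g : W => w₀ * g * w₀⁻¹) '' (cs.simple '' X) = cs.simple '' Y := by
  obtain ⟨a, ha, b, hb, hw₀⟩ := hmem
  have hw : cs.IsMinimalInDoubleCoset Y X w₀ := fun a' ha' b' hb' =>
    hmin _ ⟨a' * a, mul_mem ha' ha, b * b', mul_mem hb hb', by rw [hw₀]; group⟩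
  exact cs.conj_image_simple_eq hw (hw₀ ▸ Subgroup.map_conj_mul_mul_eq hconj ha hb)
end
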